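/- For a finite field F_q of characteristic p and m = jp+1 with j ≥ 0, the deviation D_m(0) = P_m(0) − (1/q)·C(q+m−2,m) satisfies D_{jp+1}(0) = −D_{jp}(0). -/

import Mathlib

/-!
Let `N_m(z)` count the `m`-multisets of `F`, zeros allowed, with sum `z`. Adding `c` to every
element shifts the sum by `m • c`, so when `p ∤ m` all `q` fibres have the same size and
`q · N_m(0) = C(q+m-1, m)`. Stripping the zeros gives `N_m(0) = ∑_{k ≤ m} P_k(0)`, and the
hockey-stick identity gives `∑_{k ≤ m} C(q+k-2, k) = C(q+m-1, m)`; hence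
`∑_{k ≤ m} D_k(0) = 0` whenever `p ∤ m`. As `p` divides neither `jp + 1` nor `jp - 1`, the partial
sums up to `jp + 1` and up to `jp - 1` (empty if `j = 0`) vanish, and their difference is
`D_{jp}(0) + D_{jp+1}(0)`.
-/

/-- The number of multisets of `m` nonzero elements of `F` whose sum is `z`. -/
def partitionCount (F : Type*) [Field F] [Fintype F] [DecidableEq F]
    (m : ℕ) (z : F) : ℕ :=
  (Finset.univ.filter
    (fun s : Sym F m => (0 : F) ∉ (s : Multiset F) ∧ (s : Multiset F).sum = z)).card

/-- The deviation `D_m(0) = P_m(0) − (1/q)·C(q+m−2, m)`. -/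
noncomputable def deviation (F : Type*) [Field F] [Fintype F] [DecidableEq F]
    (q : ℕ) (m : ℕ) : ℚ :=
  (partitionCount F m (0 : F) : ℚ) - (Nat.choose (q + m - 2) m : ℚ) / q

open Finset

theorem Nat.sum_range_add_choose_self (n m : ℕ) :
    ∑ k ∈ range (m + 1), (n + k).choose k = (n + m + 1).choose m := by
  simp_rw [add_comm n, Nat.choose_symm_add]
  rw [Nat.sum_range_add_choose, add_assoc, Nat.choose_symm_add]

section SymSumCount

variable (G : Type*) [AddCommGroup G] [Fintype G] [DecidableEq G]

def symSumCount (m : ℕ) (z : G) : ℕ :=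
  #{s : Sym G m | (s : Multiset G).sum = z}

variable {G}

theorem symSumCount_eq_add_nsmul (m : ℕ) (z c : G) :
    symSumCount G m z = symSumCount G m (z + m • c) :=
  card_equiv (Sym.equivCongr (Equiv.addRight c)) fun s => by
    simp [Sym.equivCongr, Multiset.sum_map_add]

theorem card_filter_zero_mem_sum_eq (m : ℕ) (z : G) :
    #{s : Sym G (m + 1) | (s : Multiset G).sum = z ∧ 0 ∈ s} = symSumCount G m z := by
  refine (card_bij (fun t _ => 0 ::ₛ t) (fun t ht => ?_) (fun t _ t' _ h => ?_)
    fun s hs => ?_).symm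
  · simp_all [Sym.coe_cons]
  · exact (Sym.cons_inj_right 0 t t').mp h
  · simp only [mem_filter, mem_univ, true_and] at hs
    refine ⟨s.erase 0 hs.2, ?_, Sym.cons_erase hs.2⟩
    simp only [mem_filter, mem_univ, true_and, Sym.coe_erase]
    rw [← hs.1, ← Multiset.sum_erase (Sym.mem_coe.mpr hs.2), zero_add]

end SymSumCount

section Field

variable {F : Type*} [Field F] [Fintype F] [DecidableEq F]

theorem symSumCount_eq_symSumCount_zero {m : ℕ} (hm : (m : F) ≠ 0) (z : F) :
    symSumCount F m z = symSumCount F m 0 := by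
  rw [symSumCount_eq_add_nsmul m 0 ((m : F)⁻¹ * z), zero_add, nsmul_eq_mul,
    mul_inv_cancel_left₀ hm]

theorem card_mul_symSumCount_zero {m : ℕ} (hm : (m : F) ≠ 0) :
    Fintype.card F * symSumCount F m 0 = (Fintype.card F + m - 1).choose m := by
  calc Fintype.card F * symSumCount F m 0
      = ∑ z : F, symSumCount F m z := by simp [symSumCount_eq_symSumCount_zero hm]
    _ = #(univ : Finset (Sym F m)) := (card_eq_sum_card_fiberwise fun _ _ => mem_univ _).symm
    _ = (Fintype.card F + m - 1).choose m := by rw [card_univ, Sym.card_sym_eq_choose]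

theorem symSumCount_zero_eq_partitionCount (z : F) :
    symSumCount F 0 z = partitionCount F 0 z := by
  unfold symSumCount partitionCount
  congr 1
  refine filter_congr fun s _ => ?_
  simp [Sym.eq_nil_of_card_zero s]

theorem symSumCount_succ (m : ℕ) (z : F) :
    symSumCount F (m + 1) z = symSumCount F m z + partitionCount F (m + 1) z := by
  rw [symSumCount, ← card_filter_add_card_filter_not (0 ∈ ·), filter_filter, filter_filter,
    card_filter_zero_mem_sum_eq, partitionCount]
  simp only [and_comm, Sym.mem_coe]

theorem symSumCount_eq_sum_partitionCount (m : ℕ) (z : F) :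
    symSumCount F m z = ∑ k ∈ range (m + 1), partitionCount F k z := by
  induction m with
  | zero => simp [symSumCount_zero_eq_partitionCount]
  | succ m ih => rw [symSumCount_succ, ih, sum_range_succ _ (m + 1)]

theorem sum_range_deviation_eq_zero {m : ℕ} (hm : (m : F) ≠ 0) :
    ∑ k ∈ range (m + 1), deviation F (Fintype.card F) k = 0 := by
  have hN := card_mul_symSumCount_zero hm
  rw [symSumCount_eq_sum_partitionCount] at hN
  obtain ⟨n, hn⟩ : ∃ n, Fintype.card F = n + 2 :=
    Nat.exists_eq_add_of_le' Fintype.one_lt_card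
  have h_choose : ∑ k ∈ range (m + 1), (Fintype.card F + k - 2).choose k
      = (Fintype.card F + m - 1).choose m := by
    simp only [hn, show ∀ k, n + 2 + k - 2 = n + k by omega,
      show n + 2 + m - 1 = n + m + 1 by omega]
    exact Nat.sum_range_add_choose_self n m
  unfold deviation
  rw [sum_sub_distrib, ← sum_div, ← Nat.cast_sum, ← Nat.cast_sum, h_choose, ← hN, Nat.cast_mul,
    mul_div_cancel_left₀ _ (Nat.cast_ne_zero.mpr Fintype.card_ne_zero), sub_self]

end Field

theorem stmt_15_general (F : Type*) [Field F] [Fintype F] [DecidableEq F]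
    (p : ℕ) [CharP F p] (q : ℕ) (hq : q = Fintype.card F)
    (j : ℕ) :
    deviation F q (j * p + 1) = - deviation F q (j * p) := by
  subst hq
  have hjp : ((j * p : ℕ) : F) = 0 := by simp
  have h_upper : ∑ k ∈ range (j * p + 1 + 1), deviation F (Fintype.card F) k = 0 :=
    sum_range_deviation_eq_zero (by simp [hjp])
  have h_lower : ∑ k ∈ range (j * p), deviation F (Fintype.card F) k = 0 := by
    rcases eq_or_ne (j * p) 0 with h | h
    · simp [h]
    · obtain ⟨n, hn⟩ := Nat.exists_eq_add_one_of_ne_zero h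
      rw [hn] at hjp ⊢
      refine sum_range_deviation_eq_zero fun hn0 => ?_
      simp [hn0] at hjp
  rw [sum_range_succ, sum_range_succ, h_lower] at h_upper
  linarith

theorem stmt_15 (F : Type*) [Field F] [Fintype F] [DecidableEq F]
    (p : ℕ) [Fact p.Prime] [CharP F p] (q : ℕ) (hq : q = Fintype.card F)
    (j : ℕ) :
    deviation F q (j * p + 1) = - deviation F q (j * p) :=
  stmt_15_general F p q hq j
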